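/- arXiv:2003.12970 — 2 statements merged into one kernel-verified Lean document; each statement's English description precedes it below -/
import Mathlib

section
/- For every cluster index x* in the range of C_X, the conditional approximating distribution p̂(·|x*) is a probability mass function on W: ∑_{w ∈ W} p̂(w|x*) = 1. Likewise, for every w* in the range of C_W, ∑_{x ∈ X} p̂(x|w*) = 1. -/
open scoped BigOperators

noncomputable section

/-- Kullback–Leibler divergence `D(g‖h)` between nonnegative functions on a finite type,
`D(g‖h) = ∑_{t : g t > 0} g t * log (g t / h t)`, with the convention `D(g‖h) = ⊤`
whenever `g t > 0 = h t` for some `t`. -/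
def KLdiv {T : Type*} [Fintype T] (g h : T → ℝ) : EReal :=
  if ∃ t, 0 < g t ∧ h t = 0 then ⊤
  else ((∑ t ∈ Finset.univ.filter (fun t => 0 < g t),
      g t * Real.log (g t / h t) : ℝ) : EReal)

/-- Row marginal `p₁(x) = ∑_w p(x,w)`. -/
def marg₁ {A B : Type*} [Fintype B] (p : A × B → ℝ) (x : A) : ℝ := ∑ w, p (x, w)

/-- Column marginal `p₂(w) = ∑_x p(x,w)`. -/
def marg₂ {A B : Type*} [Fintype A] (p : A × B → ℝ) (w : B) : ℝ := ∑ x, p (x, w)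

/-- Co-clustered distribution `p*(x*,w*) = ∑_{x : C_X x = x*} ∑_{w : C_W w = w*} p(x,w)`. -/
def coclust {A B As Bs : Type*} [Fintype A] [Fintype B] [DecidableEq As] [DecidableEq Bs]
    (p : A × B → ℝ) (CX : A → As) (CW : B → Bs) : As × Bs → ℝ :=
  fun c => ∑ x ∈ Finset.univ.filter (fun x => CX x = c.1),
             ∑ w ∈ Finset.univ.filter (fun w => CW w = c.2), p (x, w)

/-- Approximating distribution
`p̂(x,w) = p*(C_X x, C_W w) · p₁(x) · p₂(w) / (p₁*(C_X x) · p₂*(C_W w))`. -/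
def approx {A B As Bs : Type*} [Fintype A] [Fintype B] [Fintype As] [Fintype Bs]
    [DecidableEq As] [DecidableEq Bs]
    (p : A × B → ℝ) (CX : A → As) (CW : B → Bs) : A × B → ℝ :=
  fun c =>
    coclust p CX CW (CX c.1, CW c.2) * marg₁ p c.1 * marg₂ p c.2 /
      (marg₁ (coclust p CX CW) (CX c.1) * marg₂ (coclust p CX CW) (CW c.2))

/-- Conditional distribution `p(w|x) = p(x,w)/p₁(x)` on `B`. -/
def condRow {A B : Type*} [Fintype B] (p : A × B → ℝ) (x : A) : B → ℝ :=
  fun w => p (x, w) / marg₁ p x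

/-- Conditional distribution `p(x|w) = p(x,w)/p₂(w)` on `A`. -/
def condCol {A B : Type*} [Fintype A] (p : A × B → ℝ) (w : B) : A → ℝ :=
  fun x => p (x, w) / marg₂ p w

/-- Conditional approximating distribution
`p̂(w|x*) = p*(x*, C_W w) · p₂(w) / (p₁*(x*) · p₂*(C_W w))` on `B`. -/
def approxCondRow {A B As Bs : Type*} [Fintype A] [Fintype B] [Fintype As] [Fintype Bs]
    [DecidableEq As] [DecidableEq Bs]
    (p : A × B → ℝ) (CX : A → As) (CW : B → Bs) (xs : As) : B → ℝ :=
  fun w =>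
    coclust p CX CW (xs, CW w) * marg₂ p w /
      (marg₁ (coclust p CX CW) xs * marg₂ (coclust p CX CW) (CW w))

/-- Conditional approximating distribution
`p̂(x|w*) = p*(C_X x, w*) · p₁(x) / (p₂*(w*) · p₁*(C_X x))` on `A`. -/
def approxCondCol {A B As Bs : Type*} [Fintype A] [Fintype B] [Fintype As] [Fintype Bs]
    [DecidableEq As] [DecidableEq Bs]
    (p : A × B → ℝ) (CX : A → As) (CW : B → Bs) (ws : Bs) : A → ℝ :=
  fun x =>
    coclust p CX CW (CX x, ws) * marg₁ p x /
      (marg₂ (coclust p CX CW) ws * marg₁ (coclust p CX CW) (CX x))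

/-- Mutual information `I(p) = ∑_{x,w} p(x,w) · log (p(x,w)/(p₁(x)·p₂(w)))`
(summing over all pairs; used for the strictly positive original distribution). -/
def mutualInfoFull {A B : Type*} [Fintype A] [Fintype B] (p : A × B → ℝ) : ℝ :=
  ∑ x, ∑ w, p (x, w) * Real.log (p (x, w) / (marg₁ p x * marg₂ p w))

/-- Mutual information `I(p*) = ∑_{(x*,w*) : p*(x*,w*) > 0} p*(x*,w*) ·
log (p*(x*,w*)/(p₁*(x*)·p₂*(w*)))` (summing only over positive entries). -/
def mutualInfoPos {A B : Type*} [Fintype A] [Fintype B] (p : A × B → ℝ) : ℝ :=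
  ∑ c ∈ Finset.univ.filter (fun c : A × B => 0 < p c),
    p c * Real.log (p c / (marg₁ p c.1 * marg₂ p c.2))

/-- The co-clustering objective `ℓ_A(C_X, C_W) = I(p) − I(p*)`. -/
def lossA {A B As Bs : Type*} [Fintype A] [Fintype B] [Fintype As] [Fintype Bs]
    [DecidableEq As] [DecidableEq Bs]
    (p : A × B → ℝ) (CX : A → As) (CW : B → Bs) : ℝ :=
  mutualInfoFull p - mutualInfoPos (coclust p CX CW)

/-- The elastic coupled co-clustering objective
`ℓ_T(C_Y, C_Z) = I(q) − I(q*) + α·D(q₁*‖π) + β·D(q₂*‖ρ)`. -/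
def lossT {A B As Bs : Type*} [Fintype A] [Fintype B] [Fintype As] [Fintype Bs]
    [DecidableEq As] [DecidableEq Bs]
    (q : A × B → ℝ) (CY : A → As) (CZ : B → Bs) (π : As → ℝ) (ρ : Bs → ℝ)
    (α β : ℝ) : EReal :=
  ((mutualInfoFull q - mutualInfoPos (coclust q CY CZ) : ℝ) : EReal)
    + (α : EReal) * KLdiv (marg₁ (coclust q CY CZ)) π
    + (β : EReal) * KLdiv (marg₂ (coclust q CY CZ)) ρ

end

section Aux

variable {X W Xs Ws : Type*} [Fintype X] [Fintype W] [Fintype Xs] [Fintype Ws]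
  [DecidableEq Xs] [DecidableEq Ws]

lemma marg₂_coclust (p : X × W → ℝ) (CX : X → Xs) (CW : W → Ws) (ws : Ws) :
    marg₂ (coclust p CX CW) ws
      = ∑ w ∈ Finset.univ.filter (fun w => CW w = ws), marg₂ p w := by
  simp only [marg₂, coclust]
  rw [Finset.sum_fiberwise Finset.univ CX
    (fun x => ∑ w ∈ Finset.univ.filter (fun w => CW w = ws), p (x, w))]
  exact Finset.sum_comm

lemma marg₁_coclust (p : X × W → ℝ) (CX : X → Xs) (CW : W → Ws) (xs : Xs) :
    marg₁ (coclust p CX CW) xs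
      = ∑ x ∈ Finset.univ.filter (fun x => CX x = xs), marg₁ p x := by
  simp only [marg₁, coclust]
  exact (Finset.sum_comm (s := (Finset.univ : Finset Ws))
      (t := Finset.univ.filter (fun x => CX x = xs))
      (f := fun ws x => ∑ w ∈ Finset.univ.filter (fun w => CW w = ws), p (x, w))).trans
    (Finset.sum_congr rfl fun x _ =>
      Finset.sum_fiberwise Finset.univ CW (fun w => p (x, w)))

lemma coclust_nonneg (p : X × W → ℝ) (hpos : ∀ c, 0 ≤ p c) (CX : X → Xs) (CW : W → Ws)
    (c : Xs × Ws) : 0 ≤ coclust p CX CW c :=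
  Finset.sum_nonneg fun _ _ => Finset.sum_nonneg fun _ _ => hpos _

lemma row_sum_one (p : X × W → ℝ) (hpos : ∀ c, 0 < p c) [Nonempty W]
    (CX : X → Xs) (CW : W → Ws) (xs : Xs) (hxs : xs ∈ Set.range CX) :
    ∑ w : W, approxCondRow p CX CW xs w = 1 := by
  obtain ⟨x0, rfl⟩ := hxs
  have hm1 : 0 < marg₁ (coclust p CX CW) (CX x0) := by
    rw [marg₁_coclust]
    refine Finset.sum_pos' (fun x _ => Finset.sum_nonneg fun w _ => (hpos _).le) ?_
    exact ⟨x0, Finset.mem_filter.2 ⟨Finset.mem_univ _, rfl⟩,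
      Finset.sum_pos (fun w _ => hpos _) Finset.univ_nonempty⟩
  have key : ∑ w : W, approxCondRow p CX CW (CX x0) w
      = ∑ ws : Ws, coclust p CX CW (CX x0, ws) / marg₁ (coclust p CX CW) (CX x0) := by
    rw [← Finset.sum_fiberwise Finset.univ CW (fun w => approxCondRow p CX CW (CX x0) w)]
    refine Finset.sum_congr rfl fun ws _ => ?_
    have hw : ∀ w ∈ Finset.univ.filter (fun w => CW w = ws),
        approxCondRow p CX CW (CX x0) w
          = coclust p CX CW (CX x0, ws) * marg₂ p w /
            (marg₁ (coclust p CX CW) (CX x0) * marg₂ (coclust p CX CW) ws) := by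
      intro w hw
      have : CW w = ws := (Finset.mem_filter.1 hw).2
      simp [approxCondRow, this]
    rw [Finset.sum_congr rfl hw, ← Finset.sum_div, ← Finset.mul_sum,
      ← marg₂_coclust p CX CW ws]
    rcases eq_or_lt_of_le (Finset.sum_nonneg
        (fun xs' _ => coclust_nonneg p (fun c => (hpos c).le) CX CW (xs', ws))
        : (0:ℝ) ≤ marg₂ (coclust p CX CW) ws) with h0 | h0
    · have hc : coclust p CX CW (CX x0, ws) = 0 := by
        have := (Finset.sum_eq_zero_iff_of_nonneg
          (fun xs' _ => coclust_nonneg p (fun c => (hpos c).le) CX CW (xs', ws))).1 h0.symm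
        exact this (CX x0) (Finset.mem_univ _)
      simp [hc]
    · have h2 : marg₂ (coclust p CX CW) ws ≠ 0 := ne_of_gt h0
      rw [mul_div_mul_right _ _ h2]
  rw [key, ← Finset.sum_div, ← marg₁]
  exact div_self hm1.ne'

end Aux

/-- For every cluster index `x*` in the range of `C_X`, the conditional approximating
distribution `p̂(·|x*)` is a probability mass function on `W`, and likewise for every
`w*` in the range of `C_W`, `p̂(·|w*)` is a probability mass function on `X`. -/
theorem approxCond_sum_one {X W Xs Ws : Type*} [Fintype X] [Fintype W] [Nonempty X] [Nonempty W]
    [Fintype Xs] [Fintype Ws] [DecidableEq Xs] [DecidableEq Ws]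
    (p : X × W → ℝ) (hpos : ∀ c, 0 < p c) (hsum : ∑ c, p c = 1)
    (CX : X → Xs) (CW : W → Ws) :
    (∀ xs ∈ Set.range CX, ∑ w : W, approxCondRow p CX CW xs w = 1) ∧
    (∀ ws ∈ Set.range CW, ∑ x : X, approxCondCol p CX CW ws x = 1) := by
  constructor
  · exact fun xs hxs => row_sum_one p hpos CX CW xs hxs
  · intro ws hws
    set q : W × X → ℝ := fun c => p (c.2, c.1) with hq
    have hcc : ∀ c : Ws × Xs, coclust q CW CX c = coclust p CX CW (c.2, c.1) := by
      intro c; simp only [coclust, hq]; rw [Finset.sum_comm]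
    have hA : marg₁ (coclust q CW CX) = fun ws => marg₂ (coclust p CX CW) ws := by
      funext ws'; simp only [marg₁, marg₂, hcc]
    have hB : marg₂ (coclust q CW CX) = fun xs => marg₁ (coclust p CX CW) xs := by
      funext xs'; simp only [marg₁, marg₂, hcc]
    have hq2 : ∀ x, marg₂ q x = marg₁ p x := fun x => rfl
    have h := row_sum_one q (fun c => hpos _) CW CX ws hws
    rw [← h]
    refine Finset.sum_congr rfl fun x _ => ?_
    simp only [approxCondCol, approxCondRow, hcc, hA, hB, hq2]
end

section
/- Nonnegativity of the elastic coupled co-clustering objective: for every pair of clusterings (C_Y, C_Z), ℓ_T(C_Y, C_Z) ≥ 0. -/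
open scoped BigOperators

/-!
Merging the cells of a block of the co-clustering into one cell can only lose mutual
information: by the log-sum inequality the cells of a block contribute at least
`q*(b) log (q*(b) / (q₁*(b₁) q₂*(b₂)))` to `I(q)`, because `q*` and `q₁* ⊗ q₂*` are the block
sums of `q` and `q₁ ⊗ q₂`. Hence `I(q) ≥ I(q*)`. The divergence terms are nonnegative by the
same inequality (Gibbs), and `α, β ≥ 0`.
-/

open Finset

theorem sum_mul_log_div_sum_le {ι : Type*} (s : Finset ι) {a b : ι → ℝ}
    (ha : ∀ i ∈ s, 0 ≤ a i) (hb : ∀ i ∈ s, 0 < b i) :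
    (∑ i ∈ s, a i) * Real.log ((∑ i ∈ s, a i) / ∑ i ∈ s, b i) ≤
      ∑ i ∈ s, a i * Real.log (a i / b i) := by
  rcases s.eq_empty_or_nonempty with rfl | hs
  · simp
  set B := ∑ i ∈ s, b i
  have hB : 0 < B := sum_pos hb hs
  -- Jensen for `x ↦ x log x` at the points `a i / b i` with weights `b i / B`
  have jensen := Real.convexOn_mul_log.map_sum_le (t := s) (w := fun i => b i / B)
    (p := fun i => a i / b i) (fun i hi => (div_pos (hb i hi) hB).le)
    (by rw [← sum_div, div_self hB.ne'])
    (fun i hi => Set.mem_Ici.2 (div_nonneg (ha i hi) (hb i hi).le))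
  have hmean : ∑ i ∈ s, (b i / B) • (a i / b i) = (∑ i ∈ s, a i) / B := by
    rw [sum_div]
    exact sum_congr rfl fun i hi => by simp only [smul_eq_mul]; field_simp [(hb i hi).ne']
  have hvalue : ∑ i ∈ s, (b i / B) • (a i / b i * Real.log (a i / b i)) =
      (∑ i ∈ s, a i * Real.log (a i / b i)) / B := by
    rw [sum_div]
    exact sum_congr rfl fun i hi => by simp only [smul_eq_mul]; field_simp [(hb i hi).ne']
  rw [hmean, hvalue, le_div_iff₀ hB] at jensen
  calc (∑ i ∈ s, a i) * Real.log ((∑ i ∈ s, a i) / B)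
      = (∑ i ∈ s, a i) / B * Real.log ((∑ i ∈ s, a i) / B) * B := by field_simp
    _ ≤ _ := jensen

theorem KLdiv_nonneg {T : Type*} [Fintype T] {g h : T → ℝ} (hg : ∀ t, 0 ≤ g t)
    (hh : ∀ t, 0 ≤ h t) (hsum : ∑ t, h t ≤ ∑ t, g t) : 0 ≤ KLdiv g h := by
  unfold KLdiv
  split_ifs with hzero
  · exact le_top
  simp only [not_exists, not_and] at hzero
  set s := univ.filter fun t => 0 < g t
  have hpos : ∀ t ∈ s, 0 < h t := fun t ht =>
    (hh t).lt_of_ne (Ne.symm (hzero t (mem_filter.1 ht).2))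
  have hgs : ∑ t ∈ s, g t = ∑ t, g t :=
    sum_filter_of_ne fun t _ ht => (hg t).lt_of_ne (Ne.symm ht)
  have hhs : ∑ t ∈ s, h t ≤ ∑ t ∈ s, g t :=
    hgs ▸ (sum_le_sum_of_subset_of_nonneg (subset_univ s) fun t _ _ => hh t).trans hsum
  have hlog : 0 ≤ (∑ t ∈ s, g t) * Real.log ((∑ t ∈ s, g t) / ∑ t ∈ s, h t) := by
    rcases s.eq_empty_or_nonempty with hs | hs
    · simp [hs]
    have hHpos : 0 < ∑ t ∈ s, h t := sum_pos hpos hs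
    exact mul_nonneg (hHpos.le.trans hhs)
      (Real.log_nonneg ((one_le_div hHpos).2 hhs))
  exact EReal.coe_nonneg.2
    (hlog.trans (sum_mul_log_div_sum_le s (fun t _ => hg t) hpos))

section Marginals

variable {A B : Type*}

theorem sum_marg₁ [Fintype A] [Fintype B] (p : A × B → ℝ) :
    ∑ x, marg₁ p x = ∑ c, p c :=
  (Fintype.sum_prod_type p).symm

theorem sum_marg₂ [Fintype A] [Fintype B] (p : A × B → ℝ) :
    ∑ w, marg₂ p w = ∑ c, p c :=
  (Fintype.sum_prod_type_right p).symm

theorem marg₁_nonneg [Fintype B] {p : A × B → ℝ} (hp : ∀ c, 0 ≤ p c) (x : A) :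
    0 ≤ marg₁ p x :=
  sum_nonneg fun w _ => hp (x, w)

theorem marg₂_nonneg [Fintype A] {p : A × B → ℝ} (hp : ∀ c, 0 ≤ p c) (w : B) :
    0 ≤ marg₂ p w :=
  sum_nonneg fun x _ => hp (x, w)

theorem marg₁_mul_marg₂_pos [Fintype A] [Fintype B] {p : A × B → ℝ} (hp : ∀ c, 0 < p c)
    (c : A × B) : 0 < marg₁ p c.1 * marg₂ p c.2 :=
  mul_pos (sum_pos (fun w _ => hp (c.1, w)) ⟨c.2, mem_univ _⟩)
    (sum_pos (fun x _ => hp (x, c.2)) ⟨c.1, mem_univ _⟩)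

noncomputable def miSummand [Fintype A] [Fintype B] (p : A × B → ℝ) (c : A × B) : ℝ :=
  p c * Real.log (p c / (marg₁ p c.1 * marg₂ p c.2))

theorem mutualInfoFull_eq_sum [Fintype A] [Fintype B] (p : A × B → ℝ) :
    mutualInfoFull p = ∑ c, miSummand p c :=
  (Fintype.sum_prod_type (miSummand p)).symm

theorem mutualInfoPos_eq_sum [Fintype A] [Fintype B] {p : A × B → ℝ} (hp : ∀ c, 0 ≤ p c) :
    mutualInfoPos p = ∑ c, miSummand p c :=
  sum_filter_of_ne fun c _ hc => (hp c).lt_of_ne (Ne.symm (left_ne_zero_of_mul hc))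

end Marginals

section Coclustering

variable {A B As Bs : Type*} [Fintype A] [Fintype B] [DecidableEq As] [DecidableEq Bs]
  (CX : A → As) (CW : B → Bs)

theorem filter_prodMap_eq (cs : As × Bs) :
    ({c | Prod.map CX CW c = cs} : Finset (A × B)) =
      ({x | CX x = cs.1} : Finset A) ×ˢ ({w | CW w = cs.2} : Finset B) := by
  ext c
  simp [Prod.ext_iff]

theorem coclust_eq_sum (p : A × B → ℝ) (cs : As × Bs) :
    coclust p CX CW cs = ∑ c with Prod.map CX CW c = cs, p c := by
  rw [filter_prodMap_eq, sum_product]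
  rfl

theorem sum_prodMap_fiber_mul (g : A → ℝ) (h : B → ℝ) (cs : As × Bs) :
    ∑ c with Prod.map CX CW c = cs, g c.1 * h c.2 =
      (∑ x with CX x = cs.1, g x) * ∑ w with CW w = cs.2, h w := by
  rw [filter_prodMap_eq, sum_product, sum_mul_sum]

theorem coclust_nonneg_s11 {p : A × B → ℝ} (hp : ∀ c, 0 ≤ p c) (cs : As × Bs) :
    0 ≤ coclust p CX CW cs :=
  coclust_eq_sum CX CW p cs ▸ sum_nonneg fun c _ => hp c

theorem sum_coclust [Fintype As] [Fintype Bs] (p : A × B → ℝ) :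
    ∑ cs, coclust p CX CW cs = ∑ c, p c := by
  simp_rw [coclust_eq_sum]
  exact sum_fiberwise univ (Prod.map CX CW) p

theorem marg₁_coclust_s11 [Fintype Bs] (p : A × B → ℝ) (xs : As) :
    marg₁ (coclust p CX CW) xs = ∑ x with CX x = xs, marg₁ p x := by
  simp only [marg₁, coclust]
  rw [sum_comm]
  exact sum_congr rfl fun x _ => sum_fiberwise univ CW fun w => p (x, w)

theorem marg₂_coclust_s11 [Fintype As] (p : A × B → ℝ) (ws : Bs) :
    marg₂ (coclust p CX CW) ws = ∑ w with CW w = ws, marg₂ p w := by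
  simp only [marg₂, coclust]
  rw [sum_comm, sum_fiberwise univ CX]

theorem miSummand_coclust_le [Fintype As] [Fintype Bs] {p : A × B → ℝ} (hp : ∀ c, 0 < p c)
    (cs : As × Bs) :
    miSummand (coclust p CX CW) cs ≤ ∑ c with Prod.map CX CW c = cs, miSummand p c := by
  have hmarg : marg₁ (coclust p CX CW) cs.1 * marg₂ (coclust p CX CW) cs.2 =
      ∑ c with Prod.map CX CW c = cs, marg₁ p c.1 * marg₂ p c.2 := by
    rw [sum_prodMap_fiber_mul, marg₁_coclust_s11, marg₂_coclust_s11]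
  rw [miSummand, hmarg, coclust_eq_sum]
  exact sum_mul_log_div_sum_le _ (fun c _ => (hp c).le) fun c _ => marg₁_mul_marg₂_pos hp c

theorem mutualInfoPos_coclust_le_mutualInfoFull [Fintype As] [Fintype Bs] {p : A × B → ℝ}
    (hp : ∀ c, 0 < p c) : mutualInfoPos (coclust p CX CW) ≤ mutualInfoFull p := by
  rw [mutualInfoPos_eq_sum (coclust_nonneg_s11 CX CW fun c => (hp c).le), mutualInfoFull_eq_sum,
    ← sum_fiberwise univ (Prod.map CX CW)]
  exact sum_le_sum fun cs _ => miSummand_coclust_le CX CW hp cs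

end Coclustering

theorem lossT_nonneg_general {Y Z Ys Zs : Type*} [Fintype Y] [Fintype Z]
    [Fintype Ys] [Fintype Zs] [DecidableEq Ys] [DecidableEq Zs]
    (q : Y × Z → ℝ) (hqpos : ∀ c, 0 < q c) (hqsum : ∑ c, q c = 1)
    (π : Ys → ℝ) (hπpos : ∀ ys, 0 < π ys) (hπsum : ∑ ys, π ys = 1)
    (ρ : Zs → ℝ) (hρpos : ∀ zs, 0 < ρ zs) (hρsum : ∑ zs, ρ zs = 1)
    (α β : ℝ) (hα : 0 ≤ α) (hβ : 0 ≤ β)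
    (CY : Y → Ys) (CZ : Z → Zs) :
    (0 : EReal) ≤ lossT q CY CZ π ρ α β := by
  have hQ := coclust_nonneg_s11 CY CZ fun c => (hqpos c).le
  have hI : (0 : EReal) ≤ ((mutualInfoFull q - mutualInfoPos (coclust q CY CZ) : ℝ) : EReal) :=
    EReal.coe_nonneg.2 (sub_nonneg.2 (mutualInfoPos_coclust_le_mutualInfoFull CY CZ hqpos))
  have hD₁ : 0 ≤ KLdiv (marg₁ (coclust q CY CZ)) π :=
    KLdiv_nonneg (marg₁_nonneg hQ) (fun ys => (hπpos ys).le)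
      (by rw [hπsum, sum_marg₁, sum_coclust, hqsum])
  have hD₂ : 0 ≤ KLdiv (marg₂ (coclust q CY CZ)) ρ :=
    KLdiv_nonneg (marg₂_nonneg hQ) (fun zs => (hρpos zs).le)
      (by rw [hρsum, sum_marg₂, sum_coclust, hqsum])
  exact add_nonneg (add_nonneg hI (mul_nonneg (EReal.coe_nonneg.2 hα) hD₁))
    (mul_nonneg (EReal.coe_nonneg.2 hβ) hD₂)

/-- Nonnegativity of the elastic coupled co-clustering objective: for every pair of
clusterings `(C_Y, C_Z)`, `ℓ_T(C_Y, C_Z) ≥ 0`. -/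
theorem lossT_nonneg {Y Z Ys Zs : Type*} [Fintype Y] [Fintype Z] [Nonempty Y] [Nonempty Z]
    [Fintype Ys] [Fintype Zs] [DecidableEq Ys] [DecidableEq Zs]
    (q : Y × Z → ℝ) (hqpos : ∀ c, 0 < q c) (hqsum : ∑ c, q c = 1)
    (π : Ys → ℝ) (hπpos : ∀ ys, 0 < π ys) (hπsum : ∑ ys, π ys = 1)
    (ρ : Zs → ℝ) (hρpos : ∀ zs, 0 < ρ zs) (hρsum : ∑ zs, ρ zs = 1)
    (α β : ℝ) (hα : 0 ≤ α) (hβ : 0 ≤ β)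
    (CY : Y → Ys) (CZ : Z → Zs) :
    (0 : EReal) ≤ lossT q CY CZ π ρ α β :=
  lossT_nonneg_general q hqpos hqsum π hπpos hπsum ρ hρpos hρsum α β hα hβ CY CZ
end
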